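/- arXiv:1912.08199 — 3 statements merged into one kernel-verified Lean document; each statement's English description precedes it below -/
import Mathlib

section
/- The set ℝ* × ℝ^{2n−1} × ℝ^{2n} with the operation (a, s, t) ∘ (a', s', t') = (aa', s + |a|^{1 − 1/(2n)} s', t + S_s A_a t') is a group, with neutral element (1, 0, 0) and inverse (a, s, t)⁻¹ = (a⁻¹, −|a|^{1/(2n) − 1} s, −A_a⁻¹ S_s⁻¹ t). -/
open Matrix


noncomputable def shearletA (n : ℕ) (a : ℝ) : Matrix (Fin (2*n)) (Fin (2*n)) ℝ :=
  Matrix.of fun i j =>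
    if i = j then (if (i : ℕ) = 0 then a else Real.sign a * |a| ^ ((1:ℝ) / (2 * (n:ℝ)))) else 0

noncomputable def shearletS (n : ℕ) (s : Fin (2*n - 1) → ℝ) : Matrix (Fin (2*n)) (Fin (2*n)) ℝ :=
  Matrix.of fun i j =>
    if i = j then 1
    else if h : (i : ℕ) = 0 ∧ (j : ℕ) ≠ 0 then s ⟨(j : ℕ) - 1, by have := j.isLt; omega⟩ else 0

noncomputable def shOp (n : ℕ)
    (p q : ℝ × (Fin (2*n - 1) → ℝ) × (Fin (2*n) → ℝ)) :
    ℝ × (Fin (2*n - 1) → ℝ) × (Fin (2*n) → ℝ) :=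
  (p.1 * q.1,
   p.2.1 + |p.1| ^ ((1:ℝ) - 1 / (2 * (n:ℝ))) • q.2.1,
   p.2.2 + (shearletS n p.2.1 * shearletA n p.1).mulVec q.2.2)

noncomputable def shInv (n : ℕ)
    (p : ℝ × (Fin (2*n - 1) → ℝ) × (Fin (2*n) → ℝ)) :
    ℝ × (Fin (2*n - 1) → ℝ) × (Fin (2*n) → ℝ) :=
  (p.1⁻¹,
   -(|p.1| ^ ((1:ℝ) / (2 * (n:ℝ)) - 1) • p.2.1),
   -(((shearletA n p.1)⁻¹ * (shearletS n p.2.1)⁻¹).mulVec p.2.2))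

noncomputable def shE (n : ℕ) : ℝ × (Fin (2*n - 1) → ℝ) × (Fin (2*n) → ℝ) := (1, 0, 0)

/-! ### Auxiliary lemmas -/

lemma real_sign_mul_abs' (a : ℝ) : Real.sign a * |a| = a := by
  rcases lt_trichotomy a 0 with h|h|h
  · rw [Real.sign_of_neg h, abs_of_neg h]; ring
  · simp [h]
  · rw [Real.sign_of_pos h, abs_of_pos h]; ring

lemma real_sign_mul' (a b : ℝ) : Real.sign (a*b) = Real.sign a * Real.sign b := by
  rcases lt_trichotomy a 0 with ha|ha|ha <;> rcases lt_trichotomy b 0 with hb|hb|hb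
  · rw [Real.sign_of_pos (mul_pos_of_neg_of_neg ha hb), Real.sign_of_neg ha,
      Real.sign_of_neg hb]; ring
  · simp [hb]
  · rw [Real.sign_of_neg (mul_neg_of_neg_of_pos ha hb), Real.sign_of_neg ha,
      Real.sign_of_pos hb]; ring
  · simp [ha]
  · simp [ha]
  · simp [ha]
  · rw [Real.sign_of_neg (mul_neg_of_pos_of_neg ha hb), Real.sign_of_pos ha,
      Real.sign_of_neg hb]; ring
  · simp [hb]
  · rw [Real.sign_of_pos (mul_pos ha hb), Real.sign_of_pos ha, Real.sign_of_pos hb]; ring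

lemma shearletA_diag (n : ℕ) (a : ℝ) :
    shearletA n a = Matrix.diagonal (fun i : Fin (2*n) =>
      if (i : ℕ) = 0 then a else Real.sign a * |a| ^ ((1:ℝ) / (2 * (n:ℝ)))) := by
  ext i j
  by_cases h : i = j <;> simp [shearletA, Matrix.diagonal, h]

lemma shearletA_one (n : ℕ) : shearletA n 1 = 1 := by
  rw [shearletA_diag]
  have : (fun i : Fin (2*n) =>
      if (i : ℕ) = 0 then (1:ℝ) else Real.sign 1 * |(1:ℝ)| ^ ((1:ℝ) / (2 * (n:ℝ))))
      = fun _ => 1 := by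
    funext i; simp [Real.sign_one]
  rw [this, Matrix.diagonal_one]

lemma shearletA_mulA (n : ℕ) (a b : ℝ) :
    shearletA n a * shearletA n b = shearletA n (a*b) := by
  rw [shearletA_diag, shearletA_diag, shearletA_diag, Matrix.diagonal_mul_diagonal]
  refine congrArg Matrix.diagonal (funext fun i => ?_)
  by_cases h : (i:ℕ) = 0 <;> simp only [h, if_true, if_false, reduceIte]
  rw [abs_mul, Real.mul_rpow (abs_nonneg a) (abs_nonneg b), real_sign_mul']
  ring

lemma sum_pair'' {m : ℕ} (i j : Fin m) (hij : i ≠ j) (f : Fin m → ℝ)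
    (h : ∀ k, k ≠ i → k ≠ j → f k = 0) : ∑ k, f k = f i + f j := by
  classical
  rw [← Finset.sum_pair hij]
  exact (Finset.sum_subset (Finset.subset_univ _)
    (fun k _ hk => h k (fun e => hk (by simp [e])) (fun e => hk (by simp [e])))).symm

lemma shearletS_zero (n : ℕ) : shearletS n 0 = 1 := by
  ext i j
  by_cases h : i = j <;> simp [shearletS, Matrix.one_apply, h]

lemma shearletS_mulS (n : ℕ) (s t : Fin (2*n - 1) → ℝ) :
    shearletS n s * shearletS n t = shearletS n (s + t) := by
  ext i j
  rw [Matrix.mul_apply]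
  by_cases hi : (i:ℕ) = 0
  · by_cases hj : (j:ℕ) = 0
    · have hij : i = j := Fin.ext (hi.trans hj.symm)
      subst hij
      have : ∀ k, shearletS n t k i = if k = i then 1 else 0 := by
        intro k
        by_cases hk : k = i
        · simp [shearletS, hk]
        · simp [shearletS, hk, hi]
      simp only [this, mul_ite, mul_one, mul_zero]
      rw [Finset.sum_ite_eq' Finset.univ i (fun k => shearletS n s i k)]
      simp [shearletS, hi]
    · have hij : i ≠ j := fun e => hj (e ▸ hi)
      rw [sum_pair'' i j hij]
      · have h1 : shearletS n s i i = 1 := by simp [shearletS]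
        have h2 : shearletS n t i j = t ⟨(j:ℕ) - 1, by have := j.isLt; omega⟩ := by
          simp [shearletS, hij, hi, hj]
        have h3 : shearletS n s i j = s ⟨(j:ℕ) - 1, by have := j.isLt; omega⟩ := by
          simp [shearletS, hij, hi, hj]
        have h4 : shearletS n t j j = 1 := by simp [shearletS]
        have h5 : shearletS n (s + t) i j
            = (s + t) ⟨(j:ℕ) - 1, by have := j.isLt; omega⟩ := by
          simp [shearletS, hij, hi, hj]
        rw [h1, h2, h3, h4, h5]
        simp [add_comm]
      · intro k hki hkj
        have hk0 : (k:ℕ) ≠ 0 := fun e => hki (Fin.ext (e.trans hi.symm))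
        have : shearletS n t k j = 0 := by simp [shearletS, hkj, hk0]
        rw [this, mul_zero]
  · have : ∀ k, shearletS n s i k = if i = k then 1 else 0 := by
      intro k
      by_cases hk : i = k
      · simp [shearletS, hk]
      · simp [shearletS, hk, hi]
    simp only [this, ite_mul, one_mul, zero_mul]
    rw [Finset.sum_ite_eq Finset.univ i (fun k => shearletS n t k j)]
    by_cases hij : i = j
    · simp [shearletS, hij]
    · simp [shearletS, hij, hi]

lemma shearletA_mul_S (n : ℕ) (a : ℝ) (ha : a ≠ 0) (s : Fin (2*n - 1) → ℝ) :
    shearletA n a * shearletS n s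
      = shearletS n (|a| ^ ((1:ℝ) - 1 / (2 * (n:ℝ))) • s) * shearletA n a := by
  rw [shearletA_diag]
  ext i j
  rw [Matrix.diagonal_mul, Matrix.mul_diagonal]
  by_cases hij : i = j
  · subst hij; simp [shearletS, mul_comm]
  · by_cases hc : (i:ℕ) = 0 ∧ (j:ℕ) ≠ 0
    · have hs : shearletS n s i j = s ⟨(j:ℕ) - 1, by have := j.isLt; omega⟩ := by
        simp [shearletS, hij, hc.1, hc.2]
      have hs' : shearletS n (|a| ^ ((1:ℝ) - 1 / (2 * (n:ℝ))) • s) i j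
          = |a| ^ ((1:ℝ) - 1 / (2 * (n:ℝ))) * s ⟨(j:ℕ) - 1, by have := j.isLt; omega⟩ := by
        simp [shearletS, hij, hc.1, hc.2]
      rw [hs, hs', if_pos hc.1, if_neg hc.2]
      have habs : |a| ^ ((1:ℝ) - 1 / (2 * (n:ℝ))) * |a| ^ ((1:ℝ) / (2 * (n:ℝ))) = |a| := by
        rw [← Real.rpow_add (abs_pos.mpr ha)]
        norm_num
      have h2 : |a| ^ ((1:ℝ) - 1 / (2 * (n:ℝ)))
          * (Real.sign a * |a| ^ ((1:ℝ) / (2 * (n:ℝ)))) = a := by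
        rw [mul_comm (Real.sign a) (|a| ^ ((1:ℝ) / (2 * (n:ℝ)))), ← mul_assoc, habs,
          mul_comm, real_sign_mul_abs']
      linear_combination (-(s ⟨(j:ℕ) - 1, by have := j.isLt; omega⟩)) * h2
    · have hs : shearletS n s i j = 0 := by
        simp only [shearletS, Matrix.of_apply, if_neg hij, dif_neg hc]
      have hs' : shearletS n (|a| ^ ((1:ℝ) - 1 / (2 * (n:ℝ))) • s) i j = 0 := by
        simp only [shearletS, Matrix.of_apply, if_neg hij, dif_neg hc]
      rw [hs, hs', mul_zero, zero_mul]

lemma shearletA_inv (n : ℕ) (a : ℝ) (ha : a ≠ 0) :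
    (shearletA n a)⁻¹ = shearletA n a⁻¹ :=
  Matrix.inv_eq_right_inv (by rw [shearletA_mulA, mul_inv_cancel₀ ha, shearletA_one])

lemma shearletS_inv (n : ℕ) (s : Fin (2*n - 1) → ℝ) :
    (shearletS n s)⁻¹ = shearletS n (-s) :=
  Matrix.inv_eq_right_inv (by rw [shearletS_mulS, add_neg_cancel, shearletS_zero])

lemma SA_mul (n : ℕ) (a b : ℝ) (ha : a ≠ 0) (s t : Fin (2*n - 1) → ℝ) :
    (shearletS n s * shearletA n a) * (shearletS n t * shearletA n b)
      = shearletS n (s + |a| ^ ((1:ℝ) - 1 / (2 * (n:ℝ))) • t) * shearletA n (a*b) := by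
  calc (shearletS n s * shearletA n a) * (shearletS n t * shearletA n b)
      = shearletS n s * (shearletA n a * shearletS n t) * shearletA n b := by
        rw [mul_assoc, mul_assoc, mul_assoc]
    _ = shearletS n s * (shearletS n (|a| ^ ((1:ℝ) - 1 / (2 * (n:ℝ))) • t)
          * shearletA n a) * shearletA n b := by rw [shearletA_mul_S n a ha]
    _ = (shearletS n s * shearletS n (|a| ^ ((1:ℝ) - 1 / (2 * (n:ℝ))) • t))
          * (shearletA n a * shearletA n b) := by
        rw [mul_assoc, mul_assoc, mul_assoc]
    _ = shearletS n (s + |a| ^ ((1:ℝ) - 1 / (2 * (n:ℝ))) • t) * shearletA n (a*b) := by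
        rw [shearletS_mulS, shearletA_mulA]

theorem shearlet_group (n : ℕ) (hn : 0 < n) :
    (∀ p q r : ℝ × (Fin (2*n - 1) → ℝ) × (Fin (2*n) → ℝ), p.1 ≠ 0 → q.1 ≠ 0 → r.1 ≠ 0 →
        shOp n (shOp n p q) r = shOp n p (shOp n q r)) ∧
    (∀ p : ℝ × (Fin (2*n - 1) → ℝ) × (Fin (2*n) → ℝ), shOp n (shE n) p = p) ∧
    (∀ p : ℝ × (Fin (2*n - 1) → ℝ) × (Fin (2*n) → ℝ), shOp n p (shE n) = p) ∧
    (∀ p : ℝ × (Fin (2*n - 1) → ℝ) × (Fin (2*n) → ℝ), p.1 ≠ 0 →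
        shOp n p (shInv n p) = shE n ∧ shOp n (shInv n p) p = shE n) := by
  refine ⟨?_, ?_, ?_, ?_⟩
  · rintro ⟨a, s, t⟩ ⟨b, u, v⟩ ⟨c, w, x⟩ ha hb hc
    simp only [shOp, Prod.mk.injEq]
    refine ⟨mul_assoc a b c, ?_, ?_⟩
    · rw [abs_mul, Real.mul_rpow (abs_nonneg a) (abs_nonneg b), smul_add, smul_smul,
        add_assoc]
    · rw [Matrix.mulVec_add, Matrix.mulVec_mulVec, SA_mul n a b ha, add_assoc]
  · rintro ⟨a, s, t⟩
    simp only [shOp, shE, Prod.mk.injEq]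
    refine ⟨one_mul a, ?_, ?_⟩
    · simp
    · rw [shearletS_zero, shearletA_one, one_mul, Matrix.one_mulVec, zero_add]
  · rintro ⟨a, s, t⟩
    simp only [shOp, shE, Prod.mk.injEq]
    exact ⟨mul_one a, by simp, by simp⟩
  · rintro ⟨a, s, t⟩ ha
    have hexp : ((1:ℝ) - 1 / (2 * (n:ℝ))) + ((1:ℝ) / (2 * (n:ℝ)) - 1) = 0 := by ring
    have h0 : |a| ^ ((1:ℝ) - 1 / (2 * (n:ℝ))) * |a| ^ ((1:ℝ) / (2 * (n:ℝ)) - 1) = 1 := by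
      rw [← Real.rpow_add (abs_pos.mpr ha), hexp, Real.rpow_zero]
    have hinv : |a⁻¹| ^ ((1:ℝ) - 1 / (2 * (n:ℝ))) = |a| ^ ((1:ℝ) / (2 * (n:ℝ)) - 1) := by
      rw [abs_inv, Real.inv_rpow (abs_nonneg a), ← Real.rpow_neg (abs_nonneg a)]
      congr 1; ring
    constructor
    · simp only [shOp, shInv, shE, Prod.mk.injEq]
      refine ⟨mul_inv_cancel₀ ha, ?_, ?_⟩
      · rw [smul_neg, smul_smul, h0, one_smul, add_neg_cancel]
      · rw [shearletA_inv n a ha, shearletS_inv, Matrix.mulVec_neg, Matrix.mulVec_mulVec]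
        have : (shearletS n s * shearletA n a) * (shearletA n a⁻¹ * shearletS n (-s))
            = 1 := by
          rw [mul_assoc, ← mul_assoc (shearletA n a), shearletA_mulA,
            mul_inv_cancel₀ ha, shearletA_one, one_mul, shearletS_mulS, add_neg_cancel,
            shearletS_zero]
        rw [this, Matrix.one_mulVec, add_neg_cancel]
    · simp only [shOp, shInv, shE, Prod.mk.injEq]
      refine ⟨inv_mul_cancel₀ ha, ?_, ?_⟩
      · rw [hinv, neg_add_cancel]
      · rw [shearletA_inv n a ha, shearletS_inv]
        have key : shearletS n (-(|a| ^ ((1:ℝ) / (2 * (n:ℝ)) - 1) • s)) * shearletA n a⁻¹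
            = shearletA n a⁻¹ * shearletS n (-s) := by
          rw [shearletA_mul_S n a⁻¹ (inv_ne_zero ha), hinv, smul_neg]
        rw [key, neg_add_cancel]
end

section
/- Lieb-type interpolation: let (X, μ) be a measure space and F, G : X → ℍ measurable with ‖FG‖_{∞} ≤ M and ‖FG‖₁ ≤ N < ∞. Then for every p ∈ [1, ∞), FG ∈ Lᵖ(μ) and ‖FG‖_p ≤ M^{1 − 1/p} N^{1/p}. Applied with M = ‖f‖₂‖g‖₂‖φ‖₂‖ψ‖₂ and N = sqrt(C_φ C_ψ)‖f‖₂‖g‖₂, this gives ‖SH_φ f · SH_ψ g‖_{p,μ} ≤ (C_φ C_ψ)^{1/(2p)} ‖f‖₂‖g‖₂ (‖φ‖₂‖ψ‖₂)^{1 − 1/p}. -/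
open MeasureTheory

/-! Since `‖h‖ ≤ ‖h‖_∞` almost everywhere, `∫ ‖h‖^p ≤ ‖h‖_∞^(p-1) ∫ ‖h‖`; taking `p`-th roots
gives `‖h‖_p ≤ ‖h‖_∞^(1-1/p) ‖h‖_1^(1/p)`. -/

section Interpolation

variable {α E : Type*} [MeasurableSpace α] {μ : Measure α} [NormedAddCommGroup E]

theorem lintegral_rpow_enorm_le_eLpNorm_top_rpow_mul_eLpNorm_one {f : α → E}
    (hf : AEStronglyMeasurable f μ) {p : ℝ} (hp : 1 ≤ p) :
    ∫⁻ x, ‖f x‖ₑ ^ p ∂μ ≤ eLpNorm f ⊤ μ ^ (p - 1) * eLpNorm f 1 μ := by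
  have hp1 : 0 ≤ p - 1 := sub_nonneg.mpr hp
  rw [eLpNorm_one_eq_lintegral_enorm, ← lintegral_const_mul'' _ hf.enorm]
  refine lintegral_mono_ae ?_
  filter_upwards [ae_le_eLpNormEssSup (f := f) (μ := μ)] with x hx
  calc ‖f x‖ₑ ^ p = ‖f x‖ₑ ^ (p - 1) * ‖f x‖ₑ := by
        simpa using ENNReal.rpow_add_of_nonneg (x := ‖f x‖ₑ) _ _ hp1 zero_le_one
  _ ≤ eLpNorm f ⊤ μ ^ (p - 1) * ‖f x‖ₑ := by
        gcongr
        rwa [eLpNorm_exponent_top]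

theorem eLpNorm_le_eLpNorm_top_rpow_mul_eLpNorm_one_rpow {f : α → E}
    (hf : AEStronglyMeasurable f μ) {p : ℝ} (hp : 1 ≤ p) :
    eLpNorm f (ENNReal.ofReal p) μ ≤
      eLpNorm f ⊤ μ ^ (1 - 1 / p) * eLpNorm f 1 μ ^ (1 / p) := by
  have hp0 : 0 < p := zero_lt_one.trans_le hp
  rw [eLpNorm_eq_lintegral_rpow_enorm_toReal (by simpa using hp0) ENNReal.ofReal_ne_top,
    ENNReal.toReal_ofReal hp0.le]
  calc (∫⁻ x, ‖f x‖ₑ ^ p ∂μ) ^ (1 / p)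
      ≤ (eLpNorm f ⊤ μ ^ (p - 1) * eLpNorm f 1 μ) ^ (1 / p) := by
        gcongr
        exact lintegral_rpow_enorm_le_eLpNorm_top_rpow_mul_eLpNorm_one hf hp
    _ = eLpNorm f ⊤ μ ^ (1 - 1 / p) * eLpNorm f 1 μ ^ (1 / p) := by
        rw [ENNReal.mul_rpow_of_nonneg _ _ (by positivity), ← ENNReal.rpow_mul]
        congr 2
        field_simp

end Interpolation

theorem lieb_interpolation {X : Type*} [MeasurableSpace X] (μ : Measure X)
    (F G : X → Quaternion ℝ)
    (hm : AEStronglyMeasurable (fun x => F x * G x) μ)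
    (M N : ℝ) (hM : 0 ≤ M) (hN : 0 ≤ N)
    (hInf : eLpNorm (fun x => F x * G x) ⊤ μ ≤ ENNReal.ofReal M)
    (h1 : eLpNorm (fun x => F x * G x) 1 μ ≤ ENNReal.ofReal N)
    (p : ℝ) (hp : 1 ≤ p) :
    MemLp (fun x => F x * G x) (ENNReal.ofReal p) μ ∧
    eLpNorm (fun x => F x * G x) (ENNReal.ofReal p) μ
      ≤ ENNReal.ofReal (M ^ (1 - 1/p) * N ^ (1/p)) := by
  have hp0 : 0 < p := zero_lt_one.trans_le hp
  have hq : 0 ≤ 1 - 1 / p := sub_nonneg.mpr ((div_le_one hp0).mpr hp)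
  have hbound : eLpNorm (fun x => F x * G x) (ENNReal.ofReal p) μ
      ≤ ENNReal.ofReal (M ^ (1 - 1/p) * N ^ (1/p)) := by
    calc eLpNorm (fun x => F x * G x) (ENNReal.ofReal p) μ
        ≤ eLpNorm (fun x => F x * G x) ⊤ μ ^ (1 - 1 / p)
            * eLpNorm (fun x => F x * G x) 1 μ ^ (1 / p) :=
          eLpNorm_le_eLpNorm_top_rpow_mul_eLpNorm_one_rpow hm hp
      _ ≤ ENNReal.ofReal M ^ (1 - 1 / p) * ENNReal.ofReal N ^ (1 / p) := by gcongr
      _ = ENNReal.ofReal (M ^ (1 - 1/p) * N ^ (1/p)) := by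
          rw [ENNReal.ofReal_mul (by positivity), ENNReal.ofReal_rpow_of_nonneg hM hq,
            ENNReal.ofReal_rpow_of_nonneg hN (by positivity)]
  exact ⟨⟨hm, hbound.trans_lt ENNReal.ofReal_lt_top⟩, hbound⟩
end

section
/- Strengthened concentration bound via Lᵖ norms: in the setting of the Donoho–Stark bound, if in addition ‖F‖_{p,μ}^p ≤ C ‖f‖₂^p ‖ψ‖₂^{p−2} for some p > 2, then μ(Σ) ≥ (1 − ξ²)^{p/(p−2)} C / ‖ψ‖₂². -/
/-! By concentration, `∫_T ‖F‖² ≥ (1 - ξ²) ∫ ‖F‖² = (1 - ξ²) C nf²`. Hölder's inequality for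
`χ_T · ‖F‖²` with exponents `p/(p-2)` and `p/2` bounds the same integral by
`μ(T)^(1-2/p) (∫ ‖F‖^p)^(2/p) ≤ μ(T)^(1-2/p) (C nf^p nψ^(p-2))^(2/p)`. Written as
`(C nf²) (nf nψ)^(p-2)`, the `L^p` bound makes the powers of `nf` cancel, and solving for `μ(T)`
gives the bound. -/

open MeasureTheory

section

variable {X E : Type*} [MeasurableSpace X] [NormedAddCommGroup E] {μ : Measure X}

theorem MeasureTheory.MemLp.integrable_norm_rpow_ofReal {F : X → E} {p : ℝ} (hp : 0 < p)
    (hF : MemLp F (ENNReal.ofReal p) μ) :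
    Integrable (fun x => ‖F x‖ ^ p) μ := by
  simpa [ENNReal.toReal_ofReal hp.le] using
    hF.integrable_norm_rpow (ENNReal.ofReal_pos.2 hp).ne' ENNReal.ofReal_ne_top

theorem setIntegral_norm_rpow_le {F : X → E} {p q : ℝ} (hq : 0 < q) (hqp : q < p)
    (hF : MemLp F (ENNReal.ofReal p) μ) {T : Set X} (hT : μ T ≠ ⊤) :
    ∫ x in T, ‖F x‖ ^ q ∂μ ≤ μ.real T ^ (1 - q / p) * (∫ x, ‖F x‖ ^ p ∂μ) ^ (q / p) := by
  have hp : 0 < p := hq.trans hqp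
  have : IsFiniteMeasure (μ.restrict T) := isFiniteMeasure_restrict.2 hT
  have hconj := Real.HolderConjugate.one_sub_inv_inv (div_pos hq hp) ((div_lt_one hp).2 hqp)
  have hg : MemLp (fun x => ‖F x‖ ^ q) (ENNReal.ofReal (q / p)⁻¹) (μ.restrict T) := by
    have := (hF.restrict T).norm_rpow_div (ENNReal.ofReal q)
    rwa [ENNReal.toReal_ofReal hq.le, ← ENNReal.ofReal_div_of_pos hq, ← inv_div] at this
  have holder := integral_mul_le_Lp_mul_Lq_of_nonneg hconj (.of_forall fun _ => zero_le_one)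
    (.of_forall fun _ => by positivity) (memLp_const 1) hg
  have hpow (x : X) : (‖F x‖ ^ q) ^ (q / p)⁻¹ = ‖F x‖ ^ p := by
    rw [← Real.rpow_mul (norm_nonneg _), inv_div, mul_div_cancel₀ _ hq.ne']
  simp only [one_mul, Real.one_rpow, setIntegral_const, smul_eq_mul, mul_one, one_div, inv_inv,
    hpow] at holder
  calc ∫ x in T, ‖F x‖ ^ q ∂μ
      ≤ μ.real T ^ (1 - q / p) * (∫ x in T, ‖F x‖ ^ p ∂μ) ^ (q / p) := holder
    _ ≤ μ.real T ^ (1 - q / p) * (∫ x, ‖F x‖ ^ p ∂μ) ^ (q / p) := by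
      have hnonneg : 0 ≤ᵐ[μ] fun x => ‖F x‖ ^ p := .of_forall fun _ => by positivity
      have hT_le := setIntegral_le_integral (s := T) (hF.integrable_norm_rpow_ofReal hp) hnonneg
      have hT_nonneg := setIntegral_nonneg_of_ae_restrict (s := T) (ae_restrict_of_ae hnonneg)
      gcongr

theorem mul_integral_le_setIntegral_of_setIntegral_compl_le {g : X → ℝ} (hg : Integrable g μ)
    {T : Set X} (hT : MeasurableSet T) {ε : ℝ}
    (h : ∫ x in Tᶜ, g x ∂μ ≤ ε * ∫ x, g x ∂μ) :
    (1 - ε) * ∫ x, g x ∂μ ≤ ∫ x in T, g x ∂μ := by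
  linarith [integral_add_compl hT hg]

end

theorem rpow_inv_mul_le_of_mul_le_rpow_mul {a u w m θ : ℝ} (ha : 0 ≤ a) (hu : 0 < u)
    (hw : 0 ≤ w) (hm : 0 ≤ m) (hθ : 0 < θ) (h : a * u ≤ m ^ θ * (u ^ (1 - θ) * w ^ θ)) :
    a ^ θ⁻¹ * u ≤ m * w := by
  have hu_split : u = u ^ θ * u ^ (1 - θ) := by
    rw [← Real.rpow_add hu, add_sub_cancel, Real.rpow_one]
  have key : a * u ^ θ ≤ (m * w) ^ θ := by
    refine le_of_mul_le_mul_right ?_ (Real.rpow_pos_of_pos hu (1 - θ))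
    rw [Real.mul_rpow hm hw, mul_assoc, ← hu_split]
    linarith
  calc a ^ θ⁻¹ * u = (a * u ^ θ) ^ θ⁻¹ := by
        rw [Real.mul_rpow ha (by positivity), Real.rpow_rpow_inv hu.le hθ.ne']
    _ ≤ ((m * w) ^ θ) ^ θ⁻¹ := Real.rpow_le_rpow (by positivity) key (by positivity)
    _ = m * w := Real.rpow_rpow_inv (by positivity) hθ.ne'

theorem rpow_div_sub_two_mul_le_of_mul_le_rpow_mul {a u v m p : ℝ} (ha : 0 ≤ a) (hu : 0 < u)
    (hv : 0 < v) (hm : 0 ≤ m) (hp : 2 < p)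
    (h : a * u ≤ m ^ (1 - 2 / p) * (u * v ^ (p - 2)) ^ (2 / p)) :
    a ^ (p / (p - 2)) * u ≤ m * v ^ 2 := by
  have hp0 : 0 < p := by linarith
  have hθ : 0 < 1 - 2 / p := by rwa [sub_pos, div_lt_one hp0]
  have hv_pow : (v ^ (p - 2)) ^ (2 / p) = (v ^ 2) ^ (1 - 2 / p) := by
    rw [← Real.rpow_mul hv.le, ← Real.rpow_natCast, ← Real.rpow_mul hv.le]
    congr 1; field_simp; ring
  rw [Real.mul_rpow hu.le (by positivity), hv_pow] at h
  have hexp : (1 - 2 / p)⁻¹ = p / (p - 2) := by field_simp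
  simpa only [hexp] using
    rpow_inv_mul_le_of_mul_le_rpow_mul ha hu (sq_nonneg v) hm hθ (by rwa [sub_sub_cancel])

theorem donoho_stark_lieb {X : Type*} [MeasurableSpace X] (μ : Measure X)
    (F : X → Quaternion ℝ) (hF : MemLp F 2 μ)
    (C nf nψ ξ p : ℝ) (hC : 0 < C) (hnf : 0 < nf) (hnψ : 0 < nψ) (hp : 2 < p)
    (hFp : MemLp F (ENNReal.ofReal p) μ)
    (h2 : ∫ x, ‖F x‖ ^ 2 ∂μ = C * nf ^ 2)
    (hLp : ∫ x, ‖F x‖ ^ p ∂μ ≤ C * nf ^ p * nψ ^ (p - 2))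
    (T : Set X) (hT : MeasurableSet T)
    (hξ0 : 0 ≤ ξ) (hξ1 : ξ < 1)
    (hconc : ∫ x in Tᶜ, ‖F x‖ ^ 2 ∂μ ≤ ξ ^ 2 * ∫ x, ‖F x‖ ^ 2 ∂μ) :
    ENNReal.ofReal ((1 - ξ ^ 2) ^ (p / (p - 2)) * C / nψ ^ 2) ≤ μ T := by
  obtain hμT | hμT := eq_or_ne (μ T) ⊤
  · simp [hμT]
  rw [← ofReal_measureReal hμT]
  refine ENNReal.ofReal_le_ofReal ?_
  have hLp_split : C * nf ^ p * nψ ^ (p - 2) = C * nf ^ 2 * (nf * nψ) ^ (p - 2) := by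
    have hnf_split : nf ^ p = nf ^ 2 * nf ^ (p - 2) := by
      rw [← Real.rpow_natCast, ← Real.rpow_add hnf]; norm_num
    rw [hnf_split, Real.mul_rpow hnf.le hnψ.le]; ring
  have hbound : (1 - ξ ^ 2) * (C * nf ^ 2)
      ≤ μ.real T ^ (1 - 2 / p) * (C * nf ^ 2 * (nf * nψ) ^ (p - 2)) ^ (2 / p) :=
    calc (1 - ξ ^ 2) * (C * nf ^ 2) ≤ ∫ x in T, ‖F x‖ ^ 2 ∂μ :=
          h2 ▸ mul_integral_le_setIntegral_of_setIntegral_compl_le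
            ((memLp_two_iff_integrable_sq_norm hF.1).1 hF) hT hconc
      _ ≤ μ.real T ^ (1 - 2 / p) * (∫ x, ‖F x‖ ^ p ∂μ) ^ (2 / p) := by
          simpa only [Real.rpow_two] using setIntegral_norm_rpow_le two_pos hp hFp hμT
      _ ≤ μ.real T ^ (1 - 2 / p) * (C * nf ^ 2 * (nf * nψ) ^ (p - 2)) ^ (2 / p) := by
          have : 0 ≤ ∫ x, ‖F x‖ ^ p ∂μ := integral_nonneg fun x => by positivity
          rw [← hLp_split]
          gcongr
  have key := rpow_div_sub_two_mul_le_of_mul_le_rpow_mul (by nlinarith) (by positivity)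
    (by positivity) measureReal_nonneg hp hbound
  rw [div_le_iff₀ (by positivity), ← mul_le_mul_iff_of_pos_right (pow_pos hnf 2)]
  linarith [key, mul_pow nf nψ 2]
end
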